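/- For a Euclidean quasicomposition algebra (A, ⋄, σ, h) with defect δ, the triple algebra satisfies tr(L_*(x)²) = 2·(dim A − δ)·H(x,x) for all x ∈ T(A); in particular the Killing form of T(A) is a scalar multiple of H. -/
import Mathlib


/-- Left multiplication by `x` in the triple algebra `T(A) = A × A × A`. -/
def tripleL {A : Type*} [AddCommGroup A] [Module ℝ A]
    (mul : A →ₗ[ℝ] A →ₗ[ℝ] A) (σ : A →ₗ[ℝ] A) (x : A × A × A) :
    (A × A × A) →ₗ[ℝ] (A × A × A) where
  toFun y :=
    (mul (σ x.2.2) (σ y.2.1) + mul (σ y.2.2) (σ x.2.1),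
     mul (σ x.1) (σ y.2.2) + mul (σ y.1) (σ x.2.2),
     mul (σ x.2.1) (σ y.1) + mul (σ y.2.1) (σ x.1))
  map_add' a b := by
    simp only [Prod.fst_add, Prod.snd_add, map_add, LinearMap.add_apply, Prod.mk_add_mk]
    refine Prod.ext ?_ (Prod.ext ?_ ?_) <;> simp <;> abel
  map_smul' c a := by
    simp only [Prod.smul_fst, Prod.smul_snd, map_smul, LinearMap.map_smul,
      LinearMap.smul_apply, RingHom.id_apply, Prod.smul_mk]
    refine Prod.ext ?_ (Prod.ext ?_ ?_) <;> simp [smul_add]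

/-- The product metric `H = h × h × h` on `T(A)`. -/
def tripleH {A : Type*} [AddCommGroup A] [Module ℝ A]
    (h : A →ₗ[ℝ] A →ₗ[ℝ] ℝ) (x y : A × A × A) : ℝ :=
  h x.1 y.1 + h x.2.1 y.2.1 + h x.2.2 y.2.2

section
variable {A : Type*} [AddCommGroup A] [Module ℝ A] [FiniteDimensional ℝ A]

/-- trace is invariant under conjugation by an involution. -/
lemma trace_conj_invol (σ f : A →ₗ[ℝ] A) (hσ : ∀ x, σ (σ x) = x) :
    LinearMap.trace ℝ A (σ ∘ₗ f ∘ₗ σ) = LinearMap.trace ℝ A f := by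
  rw [LinearMap.trace_comp_comm' (f ∘ₗ σ) σ]
  have : (f ∘ₗ σ) ∘ₗ σ = f := by ext y; simp [hσ y]
  rw [this]

end


/-- For a Euclidean quasicomposition algebra `(A, ⋄, σ, h)` with defect `δ`,
the triple algebra satisfies `tr(L_*(x)²) = 2·(dim A − δ)·H(x,x)` for all `x ∈ T(A)`. -/
theorem triple_killing_form
    {A : Type*} [AddCommGroup A] [Module ℝ A] [FiniteDimensional ℝ A] [Nontrivial A]
    (mul : A →ₗ[ℝ] A →ₗ[ℝ] A)
    (σ : A →ₗ[ℝ] A)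
    (hσinv : ∀ x : A, σ (σ x) = x)
    (hσmul : ∀ x y : A, σ (mul x y) = mul (σ y) (σ x))
    (h : A →ₗ[ℝ] A →ₗ[ℝ] ℝ)
    (hsymm : ∀ x y : A, h x y = h y x)
    (hpos : ∀ x : A, x ≠ 0 → 0 < h x x)
    (hσorth : ∀ x y : A, h (σ x) (σ y) = h x y)
    (hinv : ∀ x y z : A, h (mul x y) z = h x (mul z (σ y)))
    (hqc : ∀ x y : A, mul x (mul (σ x) (mul x y)) = h x x • mul x y)
    (δ : ℕ)
    (hdefect : ∀ x : A, LinearMap.trace ℝ A (mul (σ x) ∘ₗ mul x)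
        = ((Module.finrank ℝ A : ℝ) - (δ : ℝ)) * h x x) :
    ∀ x : A × A × A,
      LinearMap.trace ℝ (A × A × A) (tripleL mul σ x ∘ₗ tripleL mul σ x)
        = 2 * ((Module.finrank ℝ A : ℝ) - (δ : ℝ)) * tripleH h x x := by
  intro x
  obtain ⟨a, b, c⟩ := x
  set n : ℝ := (Module.finrank ℝ A : ℝ) - (δ : ℝ) with hn
  -- trace of R_{σu}∘R_u
  have traceR : ∀ u : A,
      LinearMap.trace ℝ A (σ ∘ₗ (mul u ∘ₗ mul (σ u)) ∘ₗ σ) = n * h u u := by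
    intro u
    rw [trace_conj_invol σ _ hσinv, LinearMap.trace_comp_comm' (mul (σ u)) (mul u)]
    exact hdefect u
  set f := tripleL mul σ (a, b, c) ∘ₗ tripleL mul σ (a, b, c) with hf
  set i1 : A →ₗ[ℝ] A × A × A := LinearMap.inl ℝ A (A × A)
  set i2 : A →ₗ[ℝ] A × A × A := (LinearMap.inr ℝ A (A × A)) ∘ₗ (LinearMap.inl ℝ A A)
  set i3 : A →ₗ[ℝ] A × A × A := (LinearMap.inr ℝ A (A × A)) ∘ₗ (LinearMap.inr ℝ A A)
  set p1 : (A × A × A) →ₗ[ℝ] A := LinearMap.fst ℝ A (A × A)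
  set p2 : (A × A × A) →ₗ[ℝ] A := (LinearMap.fst ℝ A A) ∘ₗ (LinearMap.snd ℝ A (A × A))
  set p3 : (A × A × A) →ₗ[ℝ] A := (LinearMap.snd ℝ A A) ∘ₗ (LinearMap.snd ℝ A (A × A))
  have hid : i1 ∘ₗ p1 + i2 ∘ₗ p2 + i3 ∘ₗ p3 = LinearMap.id := by
    ext y <;> simp [i1, i2, i3, p1, p2, p3]
  have hsplit : LinearMap.trace ℝ (A × A × A) f
      = LinearMap.trace ℝ A (p1 ∘ₗ f ∘ₗ i1) + LinearMap.trace ℝ A (p2 ∘ₗ f ∘ₗ i2)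
        + LinearMap.trace ℝ A (p3 ∘ₗ f ∘ₗ i3) := by
    conv_lhs => rw [show f = f ∘ₗ LinearMap.id from rfl, ← hid]
    rw [LinearMap.comp_add, LinearMap.comp_add, map_add, map_add]
    congr 1
    · congr 1
      · rw [show f ∘ₗ i1 ∘ₗ p1 = (f ∘ₗ i1) ∘ₗ p1 from rfl,
          LinearMap.trace_comp_comm' p1 (f ∘ₗ i1)]
      · rw [show f ∘ₗ i2 ∘ₗ p2 = (f ∘ₗ i2) ∘ₗ p2 from rfl,
          LinearMap.trace_comp_comm' p2 (f ∘ₗ i2)]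
    · rw [show f ∘ₗ i3 ∘ₗ p3 = (f ∘ₗ i3) ∘ₗ p3 from rfl,
        LinearMap.trace_comp_comm' p3 (f ∘ₗ i3)]
  have hb1 : p1 ∘ₗ f ∘ₗ i1
      = (mul (σ c) ∘ₗ mul c) + σ ∘ₗ (mul b ∘ₗ mul (σ b)) ∘ₗ σ := by
    ext y
    simp [f, i1, p1, tripleL, hσinv, hσmul]
  have hb2 : p2 ∘ₗ f ∘ₗ i2
      = (mul (σ a) ∘ₗ mul a) + σ ∘ₗ (mul c ∘ₗ mul (σ c)) ∘ₗ σ := by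
    ext y
    simp [f, i2, p2, tripleL, hσinv, hσmul]
  have hb3 : p3 ∘ₗ f ∘ₗ i3
      = (mul (σ b) ∘ₗ mul b) + σ ∘ₗ (mul a ∘ₗ mul (σ a)) ∘ₗ σ := by
    ext y
    simp [f, i3, p3, tripleL, hσinv, hσmul]
  rw [hsplit, hb1, hb2, hb3, map_add, map_add, map_add,
    hdefect a, hdefect b, hdefect c, traceR a, traceR b, traceR c]
  simp only [tripleH]
  ring
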